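/- For every integer k ≥ 0 and every quaternion q, one has Δ(q^{k+2}) = −2(k+1)(k+2) · Q_k(q); equivalently, Q_k(q) = −Δ(q^{k+2}) / (2(k+1)(k+2)). -/

import Mathlib

open Quaternion

noncomputable section

/-- The imaginary unit `i` of the quaternions. -/
def qI : ℍ[ℝ] := ⟨0, 1, 0, 0⟩

/-- The imaginary unit `j` of the quaternions. -/
def qJ : ℍ[ℝ] := ⟨0, 0, 1, 0⟩

/-- The imaginary unit `k` of the quaternions. -/
def qK : ℍ[ℝ] := ⟨0, 0, 0, 1⟩

/-- Directional (partial) derivative of `f : ℍ → ℍ` along the direction `v`, at `q`. -/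
def dd (v : ℍ[ℝ]) (f : ℍ[ℝ] → ℍ[ℝ]) (q : ℍ[ℝ]) : ℍ[ℝ] := fderiv ℝ f q v

/-- The Cauchy–Fueter operator `∂f = ∂_{x₀}f + i ∂_{x₁}f + j ∂_{x₂}f + k ∂_{x₃}f`. -/
def CF (f : ℍ[ℝ] → ℍ[ℝ]) (q : ℍ[ℝ]) : ℍ[ℝ] :=
  dd 1 f q + qI * dd qI f q + qJ * dd qJ f q + qK * dd qK f q

/-- The conjugate Cauchy–Fueter operator `∂̄f = ∂_{x₀}f − i ∂_{x₁}f − j ∂_{x₂}f − k ∂_{x₃}f`. -/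
def CFbar (f : ℍ[ℝ] → ℍ[ℝ]) (q : ℍ[ℝ]) : ℍ[ℝ] :=
  dd 1 f q - qI * dd qI f q - qJ * dd qJ f q - qK * dd qK f q

/-- The Laplacian `Δf = ∂²_{x₀}f + ∂²_{x₁}f + ∂²_{x₂}f + ∂²_{x₃}f` on `ℍ ≅ ℝ⁴`. -/
def lap (f : ℍ[ℝ] → ℍ[ℝ]) (q : ℍ[ℝ]) : ℍ[ℝ] :=
  dd 1 (dd 1 f) q + dd qI (dd qI f) q + dd qJ (dd qJ f) q + dd qK (dd qK f) q

/-- The coefficients `T^k_j = 2(k−j+1)/((k+1)(k+2))`. -/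
def T (k j : ℕ) : ℝ := 2 * ((k : ℝ) - j + 1) / (((k : ℝ) + 1) * ((k : ℝ) + 2))

/-- The Fueter regular polynomials `Q_k(q) = ∑_{j=0}^k T^k_j q^{k−j} (conj q)^j`. -/
def Q (k : ℕ) (q : ℍ[ℝ]) : ℍ[ℝ] :=
  ∑ j ∈ Finset.range (k + 1), ((T k j : ℝ) : ℍ[ℝ]) * (q ^ (k - j) * (star q) ^ j)

/-! ### Auxiliary lemmas -/

lemma sumv (x : ℍ[ℝ]) :
    1 * x * 1 + qI * x * qI + qJ * x * qJ + qK * x * qK = -2 * star x := by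
  have h : (-2 : ℍ[ℝ]) * star x = -(star x) - star x := by noncomm_ring
  rw [h]
  ext <;> simp [Quaternion.re_mul, Quaternion.imI_mul, Quaternion.imJ_mul,
    Quaternion.imK_mul] <;> simp [qI, qJ, qK] <;> ring

lemma keyA (A x B : ℍ[ℝ]) :
    A * 1 * x * 1 * B + A * qI * x * qI * B + A * qJ * x * qJ * B + A * qK * x * qK * B
      = -2 * (A * star x * B) := by
  calc A * 1 * x * 1 * B + A * qI * x * qI * B + A * qJ * x * qJ * B + A * qK * x * qK * B
      = A * (1 * x * 1 + qI * x * qI + qJ * x * qJ + qK * x * qK) * B := by noncomm_ring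
    _ = A * (-2 * star x) * B := by rw [sumv]
    _ = -2 * (A * star x * B) := by noncomm_ring

lemma keyB (A x B : ℍ[ℝ]) :
    A * 1 * (x * 1 * B) + A * qI * (x * qI * B) + A * qJ * (x * qJ * B) + A * qK * (x * qK * B)
      = -2 * (A * star x * B) := by
  calc A * 1 * (x * 1 * B) + A * qI * (x * qI * B) + A * qJ * (x * qJ * B) + A * qK * (x * qK * B)
      = A * (1 * x * 1 + qI * x * qI + qJ * x * qJ + qK * x * qK) * B := by noncomm_ring
    _ = A * (-2 * star x) * B := by rw [sumv]
    _ = -2 * (A * star x * B) := by noncomm_ring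

lemma commq (q : ℍ[ℝ]) : Commute q (star q) := by
  rw [Commute, SemiconjBy]; ext <;> simp <;> ring

lemma reorder (q : ℍ[ℝ]) (a c d : ℕ) :
    q ^ a * (star q) ^ c * q ^ d = q ^ (a + d) * (star q) ^ c := by
  have h := (commq q).symm.pow_pow c d
  rw [mul_assoc, h.eq, ← mul_assoc, ← pow_add]

/-- derivative CLM of `p ↦ p^n` at `q` -/
def Dpow (n : ℕ) (q : ℍ[ℝ]) : ℍ[ℝ] →L[ℝ] ℍ[ℝ] :=
  ∑ i ∈ Finset.range n,
    ((ContinuousLinearMap.mul ℝ ℍ[ℝ]).flip (q ^ (n - 1 - i))).comp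
      (ContinuousLinearMap.mul ℝ ℍ[ℝ] (q ^ i))

lemma Dpow_apply (n : ℕ) (q v : ℍ[ℝ]) :
    Dpow n q v = ∑ i ∈ Finset.range n, q ^ i * v * q ^ (n - 1 - i) := by
  simp [Dpow]

lemma hasFDerivAt_pow_q (n : ℕ) (q : ℍ[ℝ]) :
    HasFDerivAt (fun p : ℍ[ℝ] => p ^ n) (Dpow n q) q := by
  induction n with
  | zero =>
      have hf : (fun p : ℍ[ℝ] => p ^ 0) = fun _ => (1 : ℍ[ℝ]) := by funext p; simp
      have h0 : Dpow 0 q = 0 := by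
        refine ContinuousLinearMap.ext fun v => ?_
        simp [Dpow_apply]
      rw [hf, h0]
      exact hasFDerivAt_const 1 q
  | succ n ih =>
      have h := ih.mul' (hasFDerivAt_id q)
      have hfun : (fun p : ℍ[ℝ] => p ^ n * id p) = fun p : ℍ[ℝ] => p ^ (n + 1) := by
        funext p; simp [pow_succ]
      have heq : Dpow (n+1) q = q ^ n • ContinuousLinearMap.id ℝ ℍ[ℝ]
          + (Dpow n q).smulRight (id q) := by
        refine ContinuousLinearMap.ext fun v => ?_
        simp only [ContinuousLinearMap.add_apply, ContinuousLinearMap.smul_apply,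
          ContinuousLinearMap.id_apply, ContinuousLinearMap.smulRight_apply, smul_eq_mul,
          Dpow_apply, id]
        rw [Finset.sum_range_succ]
        have hstep : ∀ i ∈ Finset.range n,
            q ^ i * v * q ^ (n + 1 - 1 - i) = q ^ i * v * q ^ (n - 1 - i) * q := by
          intro i hi
          rw [Finset.mem_range] at hi
          rw [show n + 1 - 1 - i = (n - 1 - i) + 1 by omega, pow_succ]
          noncomm_ring
        rw [Finset.sum_congr rfl hstep, ← Finset.sum_mul,
          show n + 1 - 1 - n = 0 by omega, pow_zero, mul_one, add_comm]
      rw [heq, ← hfun]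
      exact h

lemma dd_pow (v : ℍ[ℝ]) (n : ℕ) (q : ℍ[ℝ]) :
    fderiv ℝ (fun p : ℍ[ℝ] => p ^ n) q v = ∑ i ∈ Finset.range n, q ^ i * v * q ^ (n - 1 - i) := by
  rw [(hasFDerivAt_pow_q n q).fderiv, Dpow_apply]

lemma dd_dd_pow (v w : ℍ[ℝ]) (n : ℕ) (q : ℍ[ℝ]) :
    fderiv ℝ (fun p : ℍ[ℝ] => ∑ i ∈ Finset.range n, p ^ i * v * p ^ (n - 1 - i)) q w =
      ∑ i ∈ Finset.range n,
        ((∑ a ∈ Finset.range i, q ^ a * w * q ^ (i - 1 - a)) * v * q ^ (n - 1 - i)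
          + q ^ i * v * (∑ b ∈ Finset.range (n - 1 - i), q ^ b * w * q ^ (n - 1 - i - 1 - b))) := by
  have H : HasFDerivAt (fun p : ℍ[ℝ] => ∑ i ∈ Finset.range n, p ^ i * v * p ^ (n - 1 - i))
      (∑ i ∈ Finset.range n, ((q ^ i * v) • Dpow (n - 1 - i) q
        + ((Dpow i q).smulRight v).smulRight (q ^ (n - 1 - i)))) q := by
    apply HasFDerivAt.fun_sum
    intro i _
    exact ((hasFDerivAt_pow_q i q).mul_const' v).mul' (hasFDerivAt_pow_q (n - 1 - i) q)
  rw [H.fderiv]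
  simp only [ContinuousLinearMap.sum_apply, ContinuousLinearMap.add_apply,
    ContinuousLinearMap.smul_apply, ContinuousLinearMap.smulRight_apply, smul_eq_mul, Dpow_apply]
  apply Finset.sum_congr rfl
  intro i _
  rw [add_comm, mul_assoc]

lemma lap_pow (n : ℕ) (q : ℍ[ℝ]) :
    lap (fun p => p ^ n) q =
      (∑ i ∈ Finset.range n, ∑ a ∈ Finset.range i,
          (-2 : ℍ[ℝ]) * (q ^ a * (star q) ^ (i - 1 - a) * q ^ (n - 1 - i)))
        + ∑ i ∈ Finset.range n, ∑ b ∈ Finset.range (n - 1 - i),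
            (-2 : ℍ[ℝ]) * (q ^ i * (star q) ^ b * q ^ (n - 1 - i - 1 - b)) := by
  have hdd : ∀ v : ℍ[ℝ], dd v (fun p => p ^ n)
      = fun p => ∑ i ∈ Finset.range n, p ^ i * v * p ^ (n - 1 - i) :=
    fun v => funext fun p => dd_pow v n p
  simp only [lap, hdd, dd, dd_dd_pow]
  simp only [Finset.sum_add_distrib]
  have habel : ∀ a1 b1 a2 b2 a3 b3 a4 b4 T1 T2 : ℍ[ℝ],
      a1 + a2 + a3 + a4 = T1 → b1 + b2 + b3 + b4 = T2 →
      a1 + b1 + (a2 + b2) + (a3 + b3) + (a4 + b4) = T1 + T2 := by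
    intro a1 b1 a2 b2 a3 b3 a4 b4 T1 T2 h1 h2
    rw [← h1, ← h2]; abel
  apply habel
  · rw [← Finset.sum_add_distrib, ← Finset.sum_add_distrib, ← Finset.sum_add_distrib]
    refine Finset.sum_congr rfl fun i _ => ?_
    simp only [Finset.sum_mul]
    rw [← Finset.sum_add_distrib, ← Finset.sum_add_distrib, ← Finset.sum_add_distrib]
    refine Finset.sum_congr rfl fun a _ => ?_
    rw [← star_pow]
    exact keyA _ _ _
  · rw [← Finset.sum_add_distrib, ← Finset.sum_add_distrib, ← Finset.sum_add_distrib]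
    refine Finset.sum_congr rfl fun i _ => ?_
    simp only [Finset.mul_sum]
    rw [← Finset.sum_add_distrib, ← Finset.sum_add_distrib, ← Finset.sum_add_distrib]
    refine Finset.sum_congr rfl fun b _ => ?_
    rw [← star_pow]
    exact keyB _ _ _

lemma cnt (g : ℕ → ℍ[ℝ]) (n : ℕ) :
    ∑ i ∈ Finset.range n, ∑ j ∈ Finset.range i, g j
      = ∑ j ∈ Finset.range n, (n - 1 - j) • g j := by
  induction n with
  | zero => simp
  | succ n ih =>
      rw [Finset.sum_range_succ, ih, Finset.sum_range_succ,
        show n + 1 - 1 - n = 0 by omega, zero_smul, add_zero, ← Finset.sum_add_distrib]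
      refine Finset.sum_congr rfl fun j hj => ?_
      rw [Finset.mem_range] at hj
      rw [show n + 1 - 1 - j = (n - 1 - j) + 1 by omega, succ_nsmul]

lemma sum1_eq (k : ℕ) (q : ℍ[ℝ]) :
    (∑ i ∈ Finset.range (k + 2), ∑ a ∈ Finset.range i,
        (-2 : ℍ[ℝ]) * (q ^ a * (star q) ^ (i - 1 - a) * q ^ (k + 2 - 1 - i)))
      = ∑ j ∈ Finset.range (k + 2),
          (k + 2 - 1 - j) • ((-2 : ℍ[ℝ]) * (q ^ (k - j) * (star q) ^ j)) := by
  rw [← cnt]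
  refine Finset.sum_congr rfl fun i hi => ?_
  rw [Finset.mem_range] at hi
  rw [← Finset.sum_range_reflect (fun j => (-2 : ℍ[ℝ]) * (q ^ (k - j) * (star q) ^ j)) i]
  refine Finset.sum_congr rfl fun a ha => ?_
  rw [Finset.mem_range] at ha
  rw [reorder, show a + (k + 2 - 1 - i) = k - (i - 1 - a) by omega]

lemma sum2_eq (k : ℕ) (q : ℍ[ℝ]) :
    (∑ i ∈ Finset.range (k + 2), ∑ b ∈ Finset.range (k + 2 - 1 - i),
        (-2 : ℍ[ℝ]) * (q ^ i * (star q) ^ b * q ^ (k + 2 - 1 - i - 1 - b)))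
      = ∑ j ∈ Finset.range (k + 2),
          (k + 2 - 1 - j) • ((-2 : ℍ[ℝ]) * (q ^ (k - j) * (star q) ^ j)) := by
  rw [← cnt]
  calc (∑ i ∈ Finset.range (k + 2), ∑ b ∈ Finset.range (k + 2 - 1 - i),
        (-2 : ℍ[ℝ]) * (q ^ i * (star q) ^ b * q ^ (k + 2 - 1 - i - 1 - b)))
      = ∑ i ∈ Finset.range (k + 2), ∑ b ∈ Finset.range (k + 2 - 1 - i),
          (-2 : ℍ[ℝ]) * (q ^ (k - b) * (star q) ^ b) := by
        refine Finset.sum_congr rfl fun i hi => Finset.sum_congr rfl fun b hb => ?_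
        rw [Finset.mem_range] at hi hb
        rw [reorder, show i + (k + 2 - 1 - i - 1 - b) = k - b by omega]
    _ = ∑ i ∈ Finset.range (k + 2), ∑ b ∈ Finset.range i,
          (-2 : ℍ[ℝ]) * (q ^ (k - b) * (star q) ^ b) :=
        Finset.sum_range_reflect
          (fun i => ∑ b ∈ Finset.range i, (-2 : ℍ[ℝ]) * (q ^ (k - b) * (star q) ^ b)) (k + 2)

lemma perj (k j : ℕ) (hj : j < k + 1) (q : ℍ[ℝ]) :
    (k + 2 - 1 - j) • ((-2 : ℍ[ℝ]) * (q ^ (k - j) * (star q) ^ j))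
        + (k + 2 - 1 - j) • ((-2 : ℍ[ℝ]) * (q ^ (k - j) * (star q) ^ j))
      = (-2 * ((k : ℍ[ℝ]) + 1) * ((k : ℍ[ℝ]) + 2)) *
          (((T k j : ℝ) : ℍ[ℝ]) * (q ^ (k - j) * (star q) ^ j)) := by
  have hsc : (-2 * ((k : ℍ[ℝ]) + 1) * ((k : ℍ[ℝ]) + 2)) * ((T k j : ℝ) : ℍ[ℝ])
      = ((k + 2 - 1 - j : ℕ) : ℍ[ℝ]) * (-2) + ((k + 2 - 1 - j : ℕ) : ℍ[ℝ]) * (-2) := by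
    have hr : (-2 * ((k : ℝ) + 1) * ((k : ℝ) + 2)) * T k j
        = ((k + 2 - 1 - j : ℕ) : ℝ) * (-2) + ((k + 2 - 1 - j : ℕ) : ℝ) * (-2) := by
      have h3 : ((k + 2 - 1 - j : ℕ) : ℝ) = (k : ℝ) - j + 1 := by
        rw [Nat.cast_sub (by omega)]
        push_cast
        ring
      have h1 : ((k : ℝ) + 1) ≠ 0 := by positivity
      have h2 : ((k : ℝ) + 2) ≠ 0 := by positivity
      rw [T, h3]
      field_simp
      ring
    calc (-2 * ((k : ℍ[ℝ]) + 1) * ((k : ℍ[ℝ]) + 2)) * ((T k j : ℝ) : ℍ[ℝ])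
        = (((-2 * ((k : ℝ) + 1) * ((k : ℝ) + 2)) * T k j : ℝ) : ℍ[ℝ]) := by
          have h2 : ((2 : ℝ) : ℍ[ℝ]) = 2 := by exact_mod_cast Quaternion.coe_natCast (R := ℝ) 2
          push_cast [h2]
          noncomm_ring
      _ = ((((k + 2 - 1 - j : ℕ) : ℝ) * (-2) + ((k + 2 - 1 - j : ℕ) : ℝ) * (-2) : ℝ) : ℍ[ℝ]) := by
          rw [hr]
      _ = ((k + 2 - 1 - j : ℕ) : ℍ[ℝ]) * (-2) + ((k + 2 - 1 - j : ℕ) : ℍ[ℝ]) * (-2) := by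
          have h2 : ((2 : ℝ) : ℍ[ℝ]) = 2 := by exact_mod_cast Quaternion.coe_natCast (R := ℝ) 2
          push_cast [h2]
          noncomm_ring
  rw [nsmul_eq_mul]
  calc ((k + 2 - 1 - j : ℕ) : ℍ[ℝ]) * (-2 * (q ^ (k - j) * (star q) ^ j))
        + ((k + 2 - 1 - j : ℕ) : ℍ[ℝ]) * (-2 * (q ^ (k - j) * (star q) ^ j))
      = (((k + 2 - 1 - j : ℕ) : ℍ[ℝ]) * (-2) + ((k + 2 - 1 - j : ℕ) : ℍ[ℝ]) * (-2))
          * (q ^ (k - j) * (star q) ^ j) := by noncomm_ring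
    _ = ((-2 * ((k : ℍ[ℝ]) + 1) * ((k : ℍ[ℝ]) + 2)) * ((T k j : ℝ) : ℍ[ℝ]))
          * (q ^ (k - j) * (star q) ^ j) := by rw [hsc]
    _ = (-2 * ((k : ℍ[ℝ]) + 1) * ((k : ℍ[ℝ]) + 2)) *
          (((T k j : ℝ) : ℍ[ℝ]) * (q ^ (k - j) * (star q) ^ j)) := by rw [mul_assoc]

/-- For every `k ≥ 0` and quaternion `q`, `Δ(q^{k+2}) = −2(k+1)(k+2)·Q_k(q)`. -/
theorem laplacian_pow_eq_Q (k : ℕ) (q : ℍ[ℝ]) :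
    lap (fun p => p ^ (k + 2)) q =
      (-2 * ((k : ℍ[ℝ]) + 1) * ((k : ℍ[ℝ]) + 2)) * Q k q := by
  rw [lap_pow (k + 2) q, sum1_eq k q, sum2_eq k q, ← Finset.sum_add_distrib, Q,
    Finset.mul_sum, Finset.sum_range_succ, show k + 2 - 1 - (k + 1) = 0 by omega]
  simp only [zero_smul, add_zero]
  refine Finset.sum_congr rfl fun j hj => ?_
  exact perj k j (Finset.mem_range.mp hj) q

end
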